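/- Suppose φ is real-analytic on 𝕋³ with φ(0) = 0 and let μ₀ = (∫_{𝕋³} φ(t)²/u(0,t) dt)^{−1} (assume φ not identically 0). Then f(q) = φ(q)/u(0,q) belongs to L²(𝕋³) and satisfies h_{μ₀}(0)f = 0, i.e., 0 is an eigenvalue of h_{μ₀}(0). -/

import Mathlib

open Real MeasureTheory

noncomputable def eps (p : Fin 3 → ℝ) : ℝ := 3 - Real.cos (p 0) - Real.cos (p 1) - Real.cos (p 2)

noncomputable def uu (p q : Fin 3 → ℝ) : ℝ := eps p + eps (p - q) + eps q

/-- The torus `𝕋³`, identified with the cube `(-π, π]³`. -/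
def T3 : Set (Fin 3 → ℝ) := Set.univ.pi fun _ => Set.Ioc (-Real.pi) Real.pi

/-- `m(p) = min_{q ∈ 𝕋³} u(p,q)`, the bottom of the essential spectrum. -/
noncomputable def mfun (p : Fin 3 → ℝ) : ℝ := sInf (uu p '' T3)

/-- The Fredholm determinant `Δ_μ(p,z) = 1 - μ ∫_{𝕋³} φ(t)²/(u(p,t) - z) dt`. -/
noncomputable def Δ (μ : ℝ) (φ : (Fin 3 → ℝ) → ℝ) (p : Fin 3 → ℝ) (z : ℝ) : ℝ :=
  1 - μ * ∫ t in T3, φ t ^ 2 / (uu p t - z)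

/-!
On the cube `(-π, π]³` one has `u(0,q) = 2 ∑ (1 - cos qᵢ) ≥ (4/π²)‖q‖²`. Since `φ` is even and
`φ(0) = 0`, its Taylor expansion at `0` has no constant and no linear term, so `|φ(q)| ≤ C‖q‖²`
near `0`, hence on the whole compact cube. Thus `f = φ/u(0,·)` is bounded, hence in `L²`.
It is not a.e. zero because `u(0,·) f = φ` is continuous and nonzero somewhere on the cube, which
lies in the closure of its interior. Finally `μ₀ ∫ φ f = 1`, so `h_{μ₀}(0) f = φ - μ₀ φ ∫ φ f = 0`.
-/

open Asymptotics Filter Topology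

lemma AnalyticAt.isBigO_sq_norm_of_even {E F : Type*} [NormedAddCommGroup E] [NormedSpace ℝ E]
    [NormedAddCommGroup F] [NormedSpace ℝ F] {f : E → F} (hf : AnalyticAt ℝ f 0)
    (hev : ∀ x, f (-x) = f x) (h0 : f 0 = 0) :
    f =O[𝓝 0] fun x => ‖x‖ ^ 2 := by
  obtain ⟨p, hp⟩ := hf
  have hrem : (fun y => f y - p.partialSum 2 y) =O[𝓝 0] fun y => ‖y‖ ^ 2 := by
    simpa using hp.isBigO_sub_partialSum_pow 2
  have hrem_neg : (fun y => f (-y) - p.partialSum 2 (-y)) =O[𝓝 0] fun y => ‖y‖ ^ 2 := by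
    simpa [Function.comp_def] using
      hrem.comp_tendsto (continuous_neg.tendsto' (0 : E) 0 neg_zero)
  have hp1 : ∀ y, p 1 (fun _ => y) = continuousMultilinearCurryFin1 ℝ E F (p 1) y := fun _ => rfl
  -- the constant term vanishes and the linear term is odd
  have hsum : ∀ y, p.partialSum 2 y + p.partialSum 2 (-y) = 0 := fun y => by
    simp only [FormalMultilinearSeries.partialSum, Finset.sum_range_succ, Finset.sum_range_zero,
      hp.coeff_zero, h0, hp1, map_neg]
    abel
  have hsplit : f = fun y =>
      (2 : ℝ)⁻¹ • ((f y - p.partialSum 2 y) + (f (-y) - p.partialSum 2 (-y))) := by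
    funext y
    rw [hev, sub_add_sub_comm, hsum, sub_zero, ← two_smul ℝ, smul_smul]
    norm_num
  rw [hsplit]
  exact (hrem.add hrem_neg).const_smul_left _

lemma IsCompact.isBigO_principal_norm_pow {E F : Type*} [NormedAddCommGroup E]
    [NormedAddCommGroup F] {K : Set E} (hK : IsCompact K) {f : E → F} (hf : ContinuousOn f K)
    {n : ℕ} (hO : f =O[𝓝 0] fun x => ‖x‖ ^ n) : f =O[𝓟 K] fun x => ‖x‖ ^ n := by
  obtain ⟨c, hc⟩ := hO.bound
  obtain ⟨r, hr, hball⟩ := Metric.eventually_nhds_iff_ball.1 hc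
  obtain ⟨M, hM⟩ := (hK.diff Metric.isOpen_ball).exists_bound_of_continuousOn
    (hf.mono Set.sdiff_subset)
  refine isBigO_principal.2 ⟨max c (M / r ^ n), fun x hx => ?_⟩
  rw [norm_pow, norm_norm]
  by_cases hxr : x ∈ Metric.ball 0 r
  · calc ‖f x‖ ≤ c * ‖x‖ ^ n := by simpa using hball x hxr
      _ ≤ max c (M / r ^ n) * ‖x‖ ^ n := by gcongr; exact le_max_left _ _
  · have hrx : r ≤ ‖x‖ := by simpa using hxr
    have hM0 : 0 ≤ M := (norm_nonneg _).trans (hM x ⟨hx, hxr⟩)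
    calc ‖f x‖ ≤ M := hM x ⟨hx, hxr⟩
      _ = M / r ^ n * r ^ n := by field_simp
      _ ≤ max c (M / r ^ n) * ‖x‖ ^ n := by gcongr; exact le_max_right _ _

lemma Asymptotics.IsBigO.exists_norm_div_le_of_principal {α 𝕜 : Type*} [NormedField 𝕜]
    {s : Set α} {f g : α → 𝕜} (h : f =O[𝓟 s] g) : ∃ c, ∀ x ∈ s, ‖f x / g x‖ ≤ c := by
  obtain ⟨c, hc0, hc⟩ := h.exists_nonneg
  refine ⟨c, fun x hx => ?_⟩
  rw [norm_div]
  exact div_le_of_le_mul₀ (norm_nonneg _) hc0 (isBigOWith_principal.1 hc x hx)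

lemma sq_norm_le_sum_sq {ι : Type*} [Fintype ι] (q : ι → ℝ) : ‖q‖ ^ 2 ≤ ∑ i, q i ^ 2 := by
  have h : ‖q‖ ≤ √(∑ i, q i ^ 2) := (pi_norm_le_iff_of_nonneg (Real.sqrt_nonneg _)).2 fun i =>
    Real.abs_le_sqrt (Finset.single_le_sum (fun j _ => sq_nonneg (q j)) (Finset.mem_univ i))
  calc ‖q‖ ^ 2 ≤ √(∑ i, q i ^ 2) ^ 2 := by gcongr
    _ = ∑ i, q i ^ 2 := Real.sq_sqrt (by positivity)

lemma eps_eq_sum (q : Fin 3 → ℝ) : eps q = ∑ i, (1 - cos (q i)) := by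
  simp only [eps, Fin.sum_univ_three]
  ring

lemma eps_nonneg (q : Fin 3 → ℝ) : 0 ≤ eps q := by
  rw [eps_eq_sum]
  exact Finset.sum_nonneg fun i _ => sub_nonneg.2 (cos_le_one _)

lemma mul_sq_norm_le_eps {q : Fin 3 → ℝ} (hq : ∀ i, |q i| ≤ π) : 2 / π ^ 2 * ‖q‖ ^ 2 ≤ eps q :=
  calc 2 / π ^ 2 * ‖q‖ ^ 2 ≤ ∑ i, 2 / π ^ 2 * q i ^ 2 := by
        rw [← Finset.mul_sum]; gcongr; exact sq_norm_le_sum_sq q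
    _ ≤ ∑ i, (1 - cos (q i)) :=
        Finset.sum_le_sum fun i _ => by linarith [cos_le_one_sub_mul_cos_sq (hq i)]
    _ = eps q := (eps_eq_sum q).symm

lemma uu_zero_left (q : Fin 3 → ℝ) : uu 0 q = 2 * eps q := by
  simp only [uu, eps, zero_sub, Pi.neg_apply, Pi.zero_apply, cos_neg, cos_zero]
  ring

lemma uu_zero_left_nonneg (q : Fin 3 → ℝ) : 0 ≤ uu 0 q := by
  rw [uu_zero_left]; exact mul_nonneg zero_le_two (eps_nonneg q)

lemma continuous_uu_zero_left : Continuous (uu 0) := by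
  unfold uu eps; fun_prop

lemma measurableSet_T3 : MeasurableSet T3 := MeasurableSet.univ_pi fun _ => measurableSet_Ioc

lemma T3_subset_Icc : T3 ⊆ Set.univ.pi fun _ => Set.Icc (-π) π :=
  Set.pi_mono fun _ _ => Set.Ioc_subset_Icc_self

lemma isCompact_pi_Icc : IsCompact (Set.univ.pi fun _ : Fin 3 => Set.Icc (-π) π) :=
  isCompact_univ_pi fun _ => isCompact_Icc

lemma abs_le_pi_of_mem_T3 {q : Fin 3 → ℝ} (hq : q ∈ T3) (i : Fin 3) : |q i| ≤ π :=
  abs_le.2 (T3_subset_Icc hq i (Set.mem_univ i))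

lemma T3_subset_closure_interior : T3 ⊆ closure (interior T3) := by
  rw [T3, interior_pi_set Set.finite_univ, closure_pi_set]
  refine Set.pi_mono fun _ _ => ?_
  rw [interior_Ioc, closure_Ioo (by linarith [pi_pos])]
  exact Set.Ioc_subset_Icc_self

instance : IsFiniteMeasure (volume.restrict T3) :=
  isFiniteMeasure_restrict.2
    ((measure_mono T3_subset_Icc).trans_lt isCompact_pi_Icc.measure_lt_top).ne

lemma mul_sq_norm_le_uu_zero_left {q : Fin 3 → ℝ} (hq : q ∈ T3) :
    4 / π ^ 2 * ‖q‖ ^ 2 ≤ uu 0 q :=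
  calc 4 / π ^ 2 * ‖q‖ ^ 2 = 2 * (2 / π ^ 2 * ‖q‖ ^ 2) := by ring
    _ ≤ uu 0 q := by rw [uu_zero_left]; gcongr; exact mul_sq_norm_le_eps (abs_le_pi_of_mem_T3 hq)

lemma uu_zero_left_pos {q : Fin 3 → ℝ} (hq : q ∈ T3) (h0 : q ≠ 0) : 0 < uu 0 q :=
  lt_of_lt_of_le (by positivity) (mul_sq_norm_le_uu_zero_left hq)

lemma uu_zero_left_mul_div {φ : (Fin 3 → ℝ) → ℝ} (hφ0 : φ 0 = 0) {q : Fin 3 → ℝ} (hq : q ∈ T3) :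
    uu 0 q * (φ q / uu 0 q) = φ q := by
  rcases eq_or_ne q 0 with rfl | h0
  · simp [hφ0]
  · exact mul_div_cancel₀ _ (uu_zero_left_pos hq h0).ne'

lemma isBigO_sq_norm_uu_zero_left : (fun q : Fin 3 → ℝ => ‖q‖ ^ 2) =O[𝓟 T3] uu 0 := by
  refine isBigO_principal.2 ⟨π ^ 2 / 4, fun q hq => ?_⟩
  rw [norm_pow, norm_norm, Real.norm_of_nonneg (uu_zero_left_nonneg q)]
  calc ‖q‖ ^ 2 = π ^ 2 / 4 * (4 / π ^ 2 * ‖q‖ ^ 2) := by field_simp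
    _ ≤ π ^ 2 / 4 * uu 0 q := by gcongr; exact mul_sq_norm_le_uu_zero_left hq

lemma exists_bound_div_uu_zero_left {φ : (Fin 3 → ℝ) → ℝ} (hφ : Continuous φ)
    (hO : φ =O[𝓝 0] fun q => ‖q‖ ^ 2) : ∃ B, ∀ q ∈ T3, ‖φ q / uu 0 q‖ ≤ B := by
  have hφT3 : φ =O[𝓟 T3] fun q => ‖q‖ ^ 2 :=
    (isCompact_pi_Icc.isBigO_principal_norm_pow hφ.continuousOn hO).mono
      (principal_mono.2 T3_subset_Icc)
  exact (hφT3.trans isBigO_sq_norm_uu_zero_left).exists_norm_div_le_of_principal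

lemma not_ae_restrict_T3_eq_zero {φ : (Fin 3 → ℝ) → ℝ} (hφ : Continuous φ)
    (hne : ∃ t ∈ T3, φ t ≠ 0) : ¬ ∀ᵐ q ∂volume.restrict T3, φ q = 0 := fun h => by
  obtain ⟨t, ht, hφt⟩ := hne
  exact hφt (Measure.eqOn_of_ae_eq h hφ.continuousOn continuousOn_const
    T3_subset_closure_interior ht)

lemma integral_mul_div_pos {α : Type*} [MeasurableSpace α] {μ : Measure α} {g u : α → ℝ}
    (hu : ∀ x, 0 ≤ u x) (hint : Integrable (fun x => g x * (g x / u x)) μ)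
    (hne : ¬ ∀ᵐ x ∂μ, g x / u x = 0) : 0 < ∫ x, g x * (g x / u x) ∂μ := by
  have hnonneg : 0 ≤ fun x => g x * (g x / u x) := fun x => by
    simp only [Pi.zero_apply, ← mul_div_assoc]; exact div_nonneg (mul_self_nonneg _) (hu x)
  refine (integral_nonneg hnonneg).lt_of_ne' fun h => hne ?_
  filter_upwards [(integral_eq_zero_iff_of_nonneg hnonneg hint).1 h] with x hx
  rcases mul_eq_zero.1 hx with hg | hgu
  · rw [hg, zero_div]
  · exact hgu

/-- If `φ` is real-analytic, even, not identically zero on `𝕋³`, with `φ(0) = 0`,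
and `μ₀ = (∫ φ(t)²/u(0,t) dt)⁻¹`, then `f(q) = φ(q)/u(0,q)` is a nonzero element
of `L²(𝕋³)` satisfying `h_{μ₀}(0) f = 0`; i.e. `0` is an eigenvalue of `h_{μ₀}(0)`. -/
theorem stmt12 (φ : (Fin 3 → ℝ) → ℝ) (hφ : ∀ x, AnalyticAt ℝ φ x)
    (hev : ∀ t, φ (-t) = φ t) (hφ0 : φ 0 = 0)
    (hne : ∃ t ∈ T3, φ t ≠ 0)
    (μ₀ : ℝ) (hμ₀ : μ₀ = (∫ t in T3, φ t ^ 2 / uu 0 t)⁻¹) :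
    MemLp (fun q => φ q / uu 0 q) 2 (volume.restrict T3) ∧
    ¬ (∀ᵐ q ∂(volume.restrict T3), φ q / uu 0 q = 0) ∧
    (∀ q ∈ T3,
      uu 0 q * (φ q / uu 0 q) - μ₀ * φ q * (∫ t in T3, φ t * (φ t / uu 0 t)) = 0) := by
  have hcont : Continuous φ := continuous_iff_continuousAt.2 fun x => (hφ x).continuousAt
  have hmeas : AEStronglyMeasurable (fun q => φ q / uu 0 q) (volume.restrict T3) :=
    (hcont.measurable.div continuous_uu_zero_left.measurable).aestronglyMeasurable
  obtain ⟨B, hB⟩ := exists_bound_div_uu_zero_left hcont ((hφ 0).isBigO_sq_norm_of_even hev hφ0)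
  have hB_ae : ∀ᵐ q ∂volume.restrict T3, ‖φ q / uu 0 q‖ ≤ B :=
    ae_restrict_of_forall_mem measurableSet_T3 hB
  have hf_ne : ¬ ∀ᵐ q ∂volume.restrict T3, φ q / uu 0 q = 0 := fun h =>
    not_ae_restrict_T3_eq_zero hcont hne <| by
      filter_upwards [h, ae_restrict_mem measurableSet_T3] with q hq hqT
      rw [← uu_zero_left_mul_div hφ0 hqT, hq, mul_zero]
  have hI : 0 < ∫ t in T3, φ t * (φ t / uu 0 t) :=
    integral_mul_div_pos uu_zero_left_nonneg
      (((hcont.continuousOn.integrableOn_compact isCompact_pi_Icc).mono_set T3_subset_Icc).mul_bdd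
        hmeas hB_ae) hf_ne
  refine ⟨MemLp.of_bound hmeas B hB_ae, hf_ne, fun q hq => ?_⟩
  have hsq : ∫ t in T3, φ t ^ 2 / uu 0 t = ∫ t in T3, φ t * (φ t / uu 0 t) := by
    simp_rw [sq, mul_div_assoc]
  rw [uu_zero_left_mul_div hφ0 hq, hμ₀, hsq, mul_right_comm, inv_mul_cancel₀ hI.ne', one_mul,
    sub_self]
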